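/- Segment-Filling Fact: let S ⊆ ℝ² be a closed set, not contained in any affine line, that contains its circle centers. Suppose there are two perpendicular lines L₁ and L₂ such that S contains the point of intersection I of L₁ and L₂, another point A on L₁ with A ≠ I, and a sequence of points P₁, P₂, … lying on L₂, all distinct from I, that converges to I. Then S contains the entire closed line segment from A to I. -/

import Mathlib

open Real EuclideanGeometry

/-- A set in the Euclidean plane contains its circle centers if, whenever it contains
three non-collinear points, it contains the point equidistant from all three
(the circumcenter of the triangle they form). -/
def ContainsCircleCenters (S : Set (EuclideanSpace ℝ (Fin 2))) : Prop :=
  ∀ A ∈ S, ∀ B ∈ S, ∀ C ∈ S,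
    ¬ Collinear ℝ ({A, B, C} : Set (EuclideanSpace ℝ (Fin 2))) →
    ∀ O : EuclideanSpace ℝ (Fin 2),
      dist O A = dist O B → dist O A = dist O C → O ∈ S

/-!
Parametrise `L₁` as `c ↦ I + c • (A - I)` and call `X` a perpendicular limit point of `S` if
points of `S \ {X}` on the perpendicular to `L₁` through `X` converge to `X`. If `X` is one and
`Y ∈ S` lies on `L₁`, then for such points `Z` the triangle `Y X Z` has a right angle at `X`, so
its circumcenter, which lies in `S`, is the midpoint of `Y Z`; these midpoints approach the
midpoint of `X Y` perpendicularly. Starting from `I` and taking `Y ∈ {I, A}`, every dyadic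
parameter in `[0, 1)` gives a perpendicular limit point, and closedness of `S` fills the segment.
-/

open Filter Topology Set

local notation "ℝ²" => EuclideanSpace ℝ (Fin 2)

theorem Icc_subset_closure_of_half_mem {G : Set ℝ} (h0 : 0 ∈ G)
    (hhalf : ∀ c ∈ G, c / 2 ∈ G) (hhalf_add : ∀ c ∈ G, (c + 1) / 2 ∈ G) :
    Icc 0 1 ⊆ closure G := by
  have approx : ∀ m : ℕ, ∀ t ∈ Icc (0 : ℝ) 1, ∃ c ∈ G, |t - c| ≤ (1 / 2) ^ m := by
    intro m
    induction m with
    | zero =>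
      rintro t ⟨ht0, ht1⟩
      exact ⟨0, h0, by rw [sub_zero, abs_of_nonneg ht0]; simpa using ht1⟩
    | succ m ih =>
      rintro t ⟨ht0, ht1⟩
      rcases le_total t (1 / 2) with ht | ht
      · obtain ⟨c, hc, hct⟩ := ih (2 * t) ⟨by linarith, by linarith⟩
        refine ⟨c / 2, hhalf c hc, ?_⟩
        calc |t - c / 2| = |2 * t - c| / 2 := by rw [← abs_two, ← abs_div]; congr 1; ring
          _ ≤ (1 / 2) ^ (m + 1) := by rw [pow_succ]; linarith
      · obtain ⟨c, hc, hct⟩ := ih (2 * t - 1) ⟨by linarith, by linarith⟩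
        refine ⟨(c + 1) / 2, hhalf_add c hc, ?_⟩
        calc |t - (c + 1) / 2| = |2 * t - 1 - c| / 2 := by
              rw [← abs_two, ← abs_div]; congr 1; ring
          _ ≤ (1 / 2) ^ (m + 1) := by rw [pow_succ]; linarith
  intro t ht
  rw [Metric.mem_closure_iff]
  intro ε hε
  obtain ⟨m, hm⟩ := exists_pow_lt_of_lt_one hε (by norm_num : (1 / 2 : ℝ) < 1)
  obtain ⟨c, hc, hct⟩ := approx m t ht
  exact ⟨c, hc, by rw [Real.dist_eq]; linarith⟩

theorem ContainsCircleCenters.midpoint_mem_of_angle_eq_pi_div_two {S : Set ℝ²}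
    (hcc : ContainsCircleCenters S) {p q r : ℝ²} (hp : p ∈ S) (hq : q ∈ S) (hr : r ∈ S)
    (hpq : p ≠ q) (hrq : r ≠ q)
    (hright : ∠ p q r = π / 2) : midpoint ℝ p r ∈ S := by
  have hnc : ¬ Collinear ℝ ({p, q, r} : Set ℝ²) := by
    rw [collinear_iff_eq_or_eq_or_angle_eq_zero_or_angle_eq_pi, hright]
    have := pi_pos
    rintro (h | h | h | h) <;> first | contradiction | linarith
  set s := Sphere.ofDiameter p r
  have hd : s.IsDiameter p r := Sphere.isDiameter_ofDiameter p r
  have hdist : ∀ x ∈ s, dist (midpoint ℝ p r) x = s.radius := fun x hx => by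
    rw [hd.midpoint_eq_center]; exact mem_sphere'.1 hx
  have hqs : q ∈ s := Sphere.angle_eq_pi_div_two_iff_mem_sphere_ofDiameter.1 hright
  exact hcc p hp q hq r hr hnc _ (by rw [hdist p hd.left_mem, hdist q hqs])
    (by rw [hdist p hd.left_mem, hdist r hd.right_mem])

def IsPerpLimitPoint {E : Type*} [NormedAddCommGroup E] [InnerProductSpace ℝ E]
    (S : Set E) (v X : E) : Prop :=
  ∃ Z : ℕ → E, (∀ n, Z n ∈ S \ {X}) ∧ (∀ n, inner ℝ (Z n - X) v = 0) ∧ Tendsto Z atTop (𝓝 X)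

theorem IsPerpLimitPoint.mem {E : Type*} [NormedAddCommGroup E] [InnerProductSpace ℝ E]
    {S : Set E} {v X : E} (hS : IsClosed S) (hX : IsPerpLimitPoint S v X) : X ∈ S := by
  obtain ⟨Z, hZS, -, hZlim⟩ := hX
  exact hS.mem_of_tendsto hZlim (Eventually.of_forall fun n => (hZS n).1)

theorem IsPerpLimitPoint.add_half_smul {S : Set ℝ²} (hcc : ContainsCircleCenters S)
    (hS : IsClosed S) {v X : ℝ²} (hX : IsPerpLimitPoint S v X) {t : ℝ} (ht : X + t • v ∈ S) :
    IsPerpLimitPoint S v (X + (t / 2) • v) := by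
  by_cases htv : t • v = 0
  · have : (t / 2) • v = 0 := by rw [div_eq_inv_mul, mul_smul, htv, smul_zero]
    rwa [this, add_zero]
  have hXS := hX.mem hS
  obtain ⟨Z, hZS, hZv, hZlim⟩ := hX
  set c := X + (t / 2) • v
  have hmid : ∀ n, c + (1 / 2 : ℝ) • (Z n - X) = midpoint ℝ (X + t • v) (Z n) := fun n => by
    rw [midpoint_eq_smul_add, invOf_eq_inv]; module
  refine ⟨fun n => c + (1 / 2 : ℝ) • (Z n - X), fun n => ⟨?_, ?_⟩, fun n => ?_, ?_⟩
  · have hright : ∠ (X + t • v) X (Z n) = π / 2 := by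
      rw [angle, ← InnerProductGeometry.inner_eq_zero_iff_angle_eq_pi_div_two, vsub_eq_sub,
        vsub_eq_sub, add_sub_cancel_left, real_inner_smul_left, real_inner_comm, hZv n, mul_zero]
    show c + _ ∈ S
    rw [hmid]
    exact hcc.midpoint_mem_of_angle_eq_pi_div_two ht hXS (hZS n).1 (by simpa using htv)
      (hZS n).2 hright
  · simpa [sub_eq_zero] using (hZS n).2
  · rw [add_sub_cancel_left, real_inner_smul_left, hZv n, mul_zero]
  · simpa using tendsto_const_nhds.add ((hZlim.sub_const X).const_smul (1 / 2 : ℝ))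

theorem segment_filling_fact (S : Set (EuclideanSpace ℝ (Fin 2)))
    (hclosed : IsClosed S) (hcc : ContainsCircleCenters S)
    (I A : EuclideanSpace ℝ (Fin 2)) (hA : A ∈ S)
    (P : ℕ → EuclideanSpace ℝ (Fin 2))
    (hPS : ∀ n, P n ∈ S) (hPI : ∀ n, P n ≠ I)
    (hperp : ∀ n, (inner ℝ (P n - I) (A - I) : ℝ) = 0)
    (hlim : Filter.Tendsto P Filter.atTop (nhds I)) :
    segment ℝ A I ⊆ S := by
  set v := A - I
  set G := {c : ℝ | IsPerpLimitPoint S v (I + c • v)}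
  have hG0 : 0 ∈ G := by
    show IsPerpLimitPoint S v (I + (0 : ℝ) • v)
    rw [zero_smul, add_zero]
    exact ⟨P, fun n => ⟨hPS n, hPI n⟩, hperp, hlim⟩
  have hI : I ∈ S := by simpa using hG0.mem hclosed
  have hhalf : ∀ c ∈ G, c / 2 ∈ G := fun c hc => by
    show IsPerpLimitPoint S v _
    have := hc.add_half_smul hcc hclosed (t := -c) (by simpa using hI)
    convert this using 1; module
  have hhalf_add : ∀ c ∈ G, (c + 1) / 2 ∈ G := fun c hc => by
    show IsPerpLimitPoint S v _
    have := hc.add_half_smul hcc hclosed (t := 1 - c) (by convert hA using 1; module)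
    convert this using 1; module
  have hGS : G ⊆ {c : ℝ | I + c • v ∈ S} := fun c (hc : IsPerpLimitPoint S v _) =>
    show I + c • v ∈ S from hc.mem hclosed
  have hpreimage : IsClosed {c : ℝ | I + c • v ∈ S} := hclosed.preimage (by fun_prop)
  have hIcc := (Icc_subset_closure_of_half_mem hG0 hhalf hhalf_add).trans
    (closure_minimal hGS hpreimage)
  rw [segment_symm, segment_eq_image']
  rintro _ ⟨θ, hθ, rfl⟩
  exact hIcc hθ
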